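/- Let d ≥ 3 be an integer and F_d(s) = ∫_0^π cos θ · sin^{d-3} θ / (2(1−cos θ) + s)^{d/2−1} dθ. Then there is a constant C depending only on d such that |F_d'(s)| ≤ C · min{1/s, 1/s^{d/2+1}} for all s > 0. -/

import Mathlib

/-!
Write `U = 2 (1 - cos θ) + s`, so that `∂_θ U = 2 sin θ`. Integrating by parts against
`(sin^(d-2) θ)' = (d - 2) cos θ sin^(d-3) θ` turns `F_d(s)` into `∫ sin^(d-1) θ / U^(d/2)`, whose
integrand is positive, and differentiating under the integral sign gives
`|F_d'(s)| = (d/2) ∫ sin^(d-1) θ / U^(d/2+1)`. Since `U ≥ s`, this is at most `(d/2) π / s^(d/2+1)`.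
Since `sin² θ ≤ U`, the integrand is at most `sin θ / U²`, which integrates exactly to
`1/(2s) - 1/(2(s+4))`.
-/

open intervalIntegral Real Filter Topology Set

/-- `2 (1 - cos θ) = |e^{iθ} - 1|²` is the squared chord of the angle `θ`. -/
noncomputable def shiftedChordSq (s θ : ℝ) : ℝ := 2 * (1 - cos θ) + s

section shiftedChordSq

variable {s : ℝ}

lemma le_shiftedChordSq (s θ : ℝ) : s ≤ shiftedChordSq s θ := by
  unfold shiftedChordSq
  linarith [cos_le_one θ]

lemma shiftedChordSq_pos (hs : 0 < s) (θ : ℝ) : 0 < shiftedChordSq s θ :=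
  hs.trans_le (le_shiftedChordSq s θ)

lemma sin_sq_le_shiftedChordSq (hs : 0 ≤ s) (θ : ℝ) : sin θ ^ 2 ≤ shiftedChordSq s θ := by
  unfold shiftedChordSq
  nlinarith [sin_sq_add_cos_sq θ, neg_one_le_cos θ, cos_le_one θ]

lemma abs_sin_pow_le_shiftedChordSq_rpow (n : ℕ) (hs : 0 ≤ s) (θ : ℝ) :
    |sin θ| ^ n ≤ shiftedChordSq s θ ^ ((n : ℝ) / 2) := by
  calc |sin θ| ^ n = (sin θ ^ 2) ^ ((n : ℝ) / 2) := by
        rw [← sq_abs, ← rpow_natCast _ 2, ← rpow_mul (abs_nonneg _), Nat.cast_ofNat,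
          mul_div_cancel₀ _ two_ne_zero, rpow_natCast]
    _ ≤ shiftedChordSq s θ ^ ((n : ℝ) / 2) :=
        rpow_le_rpow (sq_nonneg _) (sin_sq_le_shiftedChordSq hs θ) (by positivity)

lemma continuous_shiftedChordSq (s : ℝ) : Continuous (shiftedChordSq s) := by
  unfold shiftedChordSq
  fun_prop

lemma continuous_shiftedChordSq_rpow (hs : 0 < s) (p : ℝ) :
    Continuous fun θ => shiftedChordSq s θ ^ p :=
  (continuous_shiftedChordSq s).rpow_const fun θ => .inl (shiftedChordSq_pos hs θ).ne'

lemma continuous_div_shiftedChordSq_rpow {g : ℝ → ℝ} (hg : Continuous g) (hs : 0 < s) (p : ℝ) :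
    Continuous fun θ => g θ / shiftedChordSq s θ ^ p :=
  hg.div (continuous_shiftedChordSq_rpow hs p) fun θ =>
    (rpow_pos_of_pos (shiftedChordSq_pos hs θ) p).ne'

lemma hasDerivAt_shiftedChordSq (s θ : ℝ) :
    HasDerivAt (shiftedChordSq s) (2 * sin θ) θ :=
  ((((hasDerivAt_cos θ).const_sub 1).const_mul 2).add_const s).congr_deriv (by ring)

lemma hasDerivAt_shiftedChordSq_rpow_shift (θ p : ℝ) (hs : 0 < s) :
    HasDerivAt (fun x => shiftedChordSq x θ ^ p) (p * shiftedChordSq s θ ^ (p - 1)) s := by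
  have h : HasDerivAt (fun x => shiftedChordSq x θ) 1 s := (hasDerivAt_id s).const_add _
  simpa using h.rpow_const (p := p) (.inl (shiftedChordSq_pos hs θ).ne')

theorem integral_cos_mul_sin_pow_div_shiftedChordSq_rpow (n : ℕ) (p : ℝ) (hs : 0 < s) :
    ∫ θ in (0 : ℝ)..π, cos θ * sin θ ^ n / shiftedChordSq s θ ^ p
      = 2 * p / (n + 1) * ∫ θ in (0 : ℝ)..π, sin θ ^ (n + 2) / shiftedChordSq s θ ^ (p + 1) := by
  have hU := shiftedChordSq_pos hs
  have hu : ∀ θ ∈ uIcc 0 π, HasDerivAt (fun θ => shiftedChordSq s θ ^ (-p))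
      (2 * sin θ * -p * shiftedChordSq s θ ^ (-p - 1)) θ := fun θ _ =>
    (hasDerivAt_shiftedChordSq s θ).rpow_const (.inl (hU θ).ne')
  have hv : ∀ θ ∈ uIcc 0 π, HasDerivAt (fun θ => sin θ ^ (n + 1) / (n + 1))
      (cos θ * sin θ ^ n) θ := fun θ _ => by
    refine (((hasDerivAt_sin θ).pow (n + 1)).div_const ((n : ℝ) + 1)).congr_deriv ?_
    rw [Nat.add_sub_cancel]
    push_cast
    field_simp
  have hu' := continuous_shiftedChordSq_rpow hs (-p - 1)
  have ibp := integral_mul_deriv_eq_deriv_mul hu hv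
    ((by fun_prop : Continuous _).intervalIntegrable _ _)
    ((by fun_prop : Continuous _).intervalIntegrable _ _)
  simp only [sin_zero, sin_pi, ne_eq, add_eq_zero, one_ne_zero, and_false, not_false_eq_true,
    zero_pow, zero_div, mul_zero, sub_zero, zero_sub] at ibp
  calc ∫ θ in (0 : ℝ)..π, cos θ * sin θ ^ n / shiftedChordSq s θ ^ p
      = ∫ θ in (0 : ℝ)..π, shiftedChordSq s θ ^ (-p) * (cos θ * sin θ ^ n) :=
        integral_congr fun θ _ => by simp only [rpow_neg (hU θ).le]; ring
    _ = ∫ θ in (0 : ℝ)..π, 2 * p / (n + 1) * (sin θ ^ (n + 2) / shiftedChordSq s θ ^ (p + 1)) := by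
        rw [ibp, ← intervalIntegral.integral_neg]
        refine integral_congr fun θ _ => ?_
        simp only [show -p - 1 = -(p + 1) by ring, rpow_neg (hU θ).le]
        ring
    _ = _ := integral_const_mul _ _

theorem hasDerivAt_integral_div_shiftedChordSq_rpow {g : ℝ → ℝ} (hg : Continuous g) {p : ℝ}
    (hp : -1 ≤ p) (a b : ℝ) (hs : 0 < s) :
    HasDerivAt (fun x => ∫ θ in a..b, g θ / shiftedChordSq x θ ^ p)
      (-p * ∫ θ in a..b, g θ / shiftedChordSq s θ ^ (p + 1)) s := by
  have hs2 : 0 < s / 2 := by positivity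
  have hball : ∀ x ∈ Metric.ball s (s / 2), s / 2 < x := fun x hx => by
    rw [Metric.mem_ball, Real.dist_eq, abs_lt] at hx
    linarith
  have key := intervalIntegral.hasDerivAt_integral_of_dominated_loc_of_deriv_le
    (μ := MeasureTheory.volume) (a := a) (b := b)
    (F := fun x θ => g θ * shiftedChordSq x θ ^ (-p))
    (F' := fun x θ => g θ * (-p * shiftedChordSq x θ ^ (-p - 1)))
    (bound := fun θ => |g θ| * (|p| * (s / 2) ^ (-p - 1)))
    (Metric.ball_mem_nhds s hs2) ?meas ?int ?meas' ?bdd ?bint ?diff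
  · refine (key.2.congr_of_eventuallyEq ?_).congr_deriv ?_
    · filter_upwards [Ioi_mem_nhds hs] with x hx
      exact integral_congr fun θ _ => by
        simp only [rpow_neg (shiftedChordSq_pos hx θ).le, div_eq_mul_inv]
    · rw [← integral_const_mul]
      refine integral_congr fun θ _ => ?_
      simp only [show -p - 1 = -(p + 1) by ring, rpow_neg (shiftedChordSq_pos hs θ).le]
      ring
  case meas =>
    filter_upwards [Ioi_mem_nhds hs] with x hx
    exact (hg.mul (continuous_shiftedChordSq_rpow hx _)).aestronglyMeasurable
  case int => exact (hg.mul (continuous_shiftedChordSq_rpow hs _)).intervalIntegrable _ _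
  case meas' =>
    exact (hg.mul (continuous_const.mul
      (continuous_shiftedChordSq_rpow hs _))).aestronglyMeasurable
  case bdd =>
    refine .of_forall fun θ _ x hx => ?_
    have hU : s / 2 ≤ shiftedChordSq x θ := (hball x hx).le.trans (le_shiftedChordSq x θ)
    rw [norm_mul, norm_mul, norm_neg, Real.norm_eq_abs, Real.norm_eq_abs, Real.norm_eq_abs,
      abs_of_nonneg (rpow_nonneg (hs2.le.trans hU) _)]
    exact mul_le_mul_of_nonneg_left (mul_le_mul_of_nonneg_left
      (rpow_le_rpow_of_nonpos hs2 hU (by linarith)) (abs_nonneg p)) (abs_nonneg _)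
  case bint => exact (hg.abs.mul continuous_const).intervalIntegrable _ _
  case diff =>
    refine .of_forall fun θ _ x hx => ?_
    exact (hasDerivAt_shiftedChordSq_rpow_shift θ _ (hs2.trans (hball x hx))).const_mul (g θ)

lemma integral_sin_div_shiftedChordSq_sq (hs : 0 < s) :
    ∫ θ in (0 : ℝ)..π, sin θ / shiftedChordSq s θ ^ 2 = 1 / (2 * s) - 1 / (2 * (s + 4)) := by
  have hU := shiftedChordSq_pos hs
  have hderiv : ∀ θ ∈ uIcc 0 π, HasDerivAt (fun θ => -(2 * shiftedChordSq s θ)⁻¹)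
      (sin θ / shiftedChordSq s θ ^ 2) θ := fun θ _ => by
    refine (((hasDerivAt_shiftedChordSq s θ).const_mul 2).inv
      (by positivity [hU θ])).neg.congr_deriv ?_
    field_simp
  have hcont : Continuous fun θ => sin θ / shiftedChordSq s θ ^ 2 :=
    continuous_sin.div ((continuous_shiftedChordSq s).pow 2) fun θ => pow_ne_zero _ (hU θ).ne'
  rw [integral_eq_sub_of_hasDerivAt hderiv (hcont.intervalIntegrable _ _)]
  simp only [shiftedChordSq, cos_pi, cos_zero]
  ring

lemma sin_pow_succ_div_shiftedChordSq_rpow_le (n : ℕ) (hs : 0 < s) {θ : ℝ} (hθ : 0 ≤ sin θ) :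
    sin θ ^ (n + 1) / shiftedChordSq s θ ^ ((n : ℝ) / 2 + 2)
      ≤ sin θ / shiftedChordSq s θ ^ 2 := by
  have hU := shiftedChordSq_pos hs θ
  have h := abs_sin_pow_le_shiftedChordSq_rpow n hs.le θ
  rw [abs_of_nonneg hθ] at h
  calc sin θ ^ (n + 1) / shiftedChordSq s θ ^ ((n : ℝ) / 2 + 2)
      = sin θ ^ n / shiftedChordSq s θ ^ ((n : ℝ) / 2) * (sin θ / shiftedChordSq s θ ^ 2) := by
        rw [rpow_add hU, rpow_two, pow_succ]
        ring
    _ ≤ 1 * (sin θ / shiftedChordSq s θ ^ 2) := by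
        gcongr
        exact div_le_one_of_le₀ h (by positivity)
    _ = sin θ / shiftedChordSq s θ ^ 2 := one_mul _

lemma integral_sin_pow_succ_div_shiftedChordSq_rpow_le (n : ℕ) (hs : 0 < s) :
    ∫ θ in (0 : ℝ)..π, sin θ ^ (n + 1) / shiftedChordSq s θ ^ ((n : ℝ) / 2 + 2)
      ≤ 1 / (2 * s) := by
  calc ∫ θ in (0 : ℝ)..π, sin θ ^ (n + 1) / shiftedChordSq s θ ^ ((n : ℝ) / 2 + 2)
      ≤ ∫ θ in (0 : ℝ)..π, sin θ / shiftedChordSq s θ ^ 2 := by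
        refine integral_mono_on pi_pos.le
          ((continuous_div_shiftedChordSq_rpow (continuous_sin.pow _) hs _).intervalIntegrable _ _)
          ?_ fun θ hθ => sin_pow_succ_div_shiftedChordSq_rpow_le n hs
            (sin_nonneg_of_nonneg_of_le_pi hθ.1 hθ.2)
        simp only [← rpow_two]
        exact (continuous_div_shiftedChordSq_rpow continuous_sin hs _).intervalIntegrable _ _
    _ = 1 / (2 * s) - 1 / (2 * (s + 4)) := integral_sin_div_shiftedChordSq_sq hs
    _ ≤ 1 / (2 * s) := sub_le_self _ (by positivity)

lemma integral_sin_pow_div_shiftedChordSq_rpow_le (n : ℕ) {p : ℝ} (hp : 0 ≤ p) (hs : 0 < s) :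
    ∫ θ in (0 : ℝ)..π, sin θ ^ n / shiftedChordSq s θ ^ p ≤ π / s ^ p := by
  calc ∫ θ in (0 : ℝ)..π, sin θ ^ n / shiftedChordSq s θ ^ p
      ≤ ∫ _ in (0 : ℝ)..π, 1 / s ^ p :=
        integral_mono_on pi_pos.le
          ((continuous_div_shiftedChordSq_rpow (continuous_sin.pow _) hs _).intervalIntegrable _ _)
          intervalIntegrable_const fun θ hθ =>
            div_le_div₀ zero_le_one
              (pow_le_one₀ (sin_nonneg_of_nonneg_of_le_pi hθ.1 hθ.2) (sin_le_one θ))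
              (rpow_pos_of_pos hs p) (rpow_le_rpow hs.le (le_shiftedChordSq s θ) hp)
    _ = π / s ^ p := by
        rw [integral_const, smul_eq_mul, sub_zero, mul_one_div]

lemma integral_sin_pow_succ_div_shiftedChordSq_rpow_le_min (n : ℕ) (hs : 0 < s) :
    ∫ θ in (0 : ℝ)..π, sin θ ^ (n + 1) / shiftedChordSq s θ ^ ((n : ℝ) / 2 + 2)
      ≤ π * min (1 / s) (1 / s ^ ((n : ℝ) / 2 + 2)) := by
  rw [mul_min_of_nonneg _ _ pi_pos.le]
  refine le_min ?_ ?_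
  · calc _ ≤ 1 / (2 * s) := integral_sin_pow_succ_div_shiftedChordSq_rpow_le n hs
      _ ≤ π * (1 / s) := by
          rw [mul_one_div, div_le_div_iff₀ (by positivity) hs]
          nlinarith [pi_gt_three]
  · rw [mul_one_div]
    exact integral_sin_pow_div_shiftedChordSq_rpow_le (n + 1) (by positivity) hs

lemma integral_sin_pow_div_shiftedChordSq_rpow_nonneg (n : ℕ) (p : ℝ) (hs : 0 < s) :
    0 ≤ ∫ θ in (0 : ℝ)..π, sin θ ^ n / shiftedChordSq s θ ^ p :=
  integral_nonneg pi_pos.le fun θ hθ =>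
    div_nonneg (pow_nonneg (sin_nonneg_of_nonneg_of_le_pi hθ.1 hθ.2) n)
      (rpow_nonneg (shiftedChordSq_pos hs θ).le p)

end shiftedChordSq

theorem Fd_deriv_bound (d : ℕ) (hd : 3 ≤ d) :
    ∃ C > (0:ℝ), ∀ s : ℝ, 0 < s →
      |deriv (fun s' : ℝ => ∫ θ in (0:ℝ)..Real.pi,
          Real.cos θ * Real.sin θ ^ (d - 3) /
            (2 * (1 - Real.cos θ) + s') ^ ((d : ℝ) / 2 - 1)) s|
        ≤ C * min (1 / s) (1 / s ^ ((d : ℝ) / 2 + 1)) := by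
  obtain ⟨n, rfl⟩ : ∃ n, d = n + 3 := ⟨d - 3, by omega⟩
  set p : ℝ := ((n + 3 : ℕ) : ℝ) / 2
  refine ⟨p * π, by positivity, fun s hs => ?_⟩
  have hF : (fun x => ∫ θ in (0 : ℝ)..π,
        cos θ * sin θ ^ (n + 3 - 3) / (2 * (1 - cos θ) + x) ^ (p - 1))
      =ᶠ[𝓝 s] fun x => ∫ θ in (0 : ℝ)..π, sin θ ^ (n + 2) / shiftedChordSq x θ ^ p := by
    filter_upwards [Ioi_mem_nhds hs] with x hx
    rw [Nat.add_sub_cancel]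
    refine (integral_cos_mul_sin_pow_div_shiftedChordSq_rpow n (p - 1) hx).trans ?_
    rw [sub_add_cancel, show 2 * (p - 1) / (n + 1) = 1 by simp only [p]; push_cast; field_simp; ring,
      one_mul]
  have hderiv := hasDerivAt_integral_div_shiftedChordSq_rpow (g := fun θ => sin θ ^ (n + 2))
    (by fun_prop) (p := p) (by linarith [show 0 ≤ p by positivity]) 0 π hs
  have hp : p + 1 = ((n + 1 : ℕ) : ℝ) / 2 + 2 := by simp only [p]; push_cast; ring
  rw [hF.deriv_eq, hderiv.deriv, abs_mul, abs_neg, abs_of_pos (by positivity),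
    abs_of_nonneg (integral_sin_pow_div_shiftedChordSq_rpow_nonneg _ _ hs), mul_assoc, hp]
  exact mul_le_mul_of_nonneg_left
    (integral_sin_pow_succ_div_shiftedChordSq_rpow_le_min (n + 1) hs) (by positivity)
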